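/- Let 𝒪 be a valuation ring with fraction field K, A a zero-dimensional local ring with residue field K, and R = 𝒪 ×_K A. In R the following divisibility trichotomy holds: for all a, b ∈ R, either a divides b, or b divides a, or a and b are both nilpotent. -/

import Mathlib

/-!
Write elements of `R` as pairs `(x, y)` with `x ∈ 𝒪`, `y ∈ A` and `x ↦ π y` in `K`. Since `𝒪` is
a valuation ring, one of `a.1 ∣ b.1`, `b.1 ∣ a.1` holds, say the first. If `a.1 ≠ 0`, then
`π a.2 ≠ 0`, so `a.2` is a unit of the local ring `A`, and the quotient `c = b.1 / a.1` lifts to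
`(c, a.2⁻¹ * b.2) ∈ R`, giving `a ∣ b`. If `a.1 = 0`, then also `b.1 = 0`, so `a.2` and `b.2` lie
in `ker π`, the maximal ideal of `A`; as `A` has dimension zero, this is its nilradical, and
`a`, `b` are nilpotent.
-/

/-- The Milnor fiber product `R = 𝒪 ×_K A` as a subring of `𝒪 × A`. -/
def milnorRing (O K A : Type*) [CommRing O] [CommRing K] [CommRing A]
    (f : O →+* K) (π : A →+* K) : Subring (O × A) :=
  RingHom.eqLocus (f.comp (RingHom.fst O A)) (π.comp (RingHom.snd O A))

namespace milnorRing

variable {O K A : Type*} [CommRing O] [CommRing K] [CommRing A] {f : O →+* K} {π : A →+* K}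

lemma mem_iff {x : O × A} : x ∈ milnorRing O K A f π ↔ f x.1 = π x.2 := Iff.rfl

lemma isNilpotent_of_fst_eq_zero (hπ : RingHom.ker π ≤ nilradical A)
    {c : milnorRing O K A f π} (hc : (c : O × A).1 = 0) : IsNilpotent c := by
  have hker : (c : O × A).2 ∈ RingHom.ker π := by
    rw [RingHom.mem_ker, ← mem_iff.mp c.2, hc, map_zero]
  obtain ⟨n, hn⟩ := mem_nilradical.mp (hπ hker)
  rw [← IsNilpotent.map_iff (milnorRing O K A f π).subtype_injective]
  exact ⟨n + 1, Prod.ext (by simp [hc]) (by simp [pow_succ, hn])⟩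

lemma dvd_of_isUnit_snd {a b : milnorRing O K A f π} (ha : IsUnit (a : O × A).2)
    (h : (a : O × A).1 ∣ (b : O × A).1) : a ∣ b := by
  have hπa := ha.map π
  obtain ⟨u, hu⟩ := ha
  obtain ⟨c, hc⟩ := h
  have hy : (a : O × A).2 * (↑u⁻¹ * (b : O × A).2) = (b : O × A).2 := by
    rw [← hu, ← mul_assoc, u.mul_inv, one_mul]
  have hmem : f c = π (↑u⁻¹ * (b : O × A).2) := by
    refine hπa.mul_left_cancel ?_
    rw [← map_mul, hy, ← mem_iff.mp b.2, ← mem_iff.mp a.2, hc, map_mul]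
  exact ⟨⟨(c, _), mem_iff.mpr hmem⟩, Subtype.ext (Prod.ext hc hy.symm)⟩

section Local

variable [IsLocalRing A]

lemma isUnit_snd_of_fst_ne_zero (hf : Function.Injective f)
    (hker : RingHom.ker π = IsLocalRing.maximalIdeal A)
    {a : milnorRing O K A f π} (ha : (a : O × A).1 ≠ 0) : IsUnit (a : O × A).2 := by
  rw [← IsLocalRing.notMem_maximalIdeal, ← hker, RingHom.mem_ker, ← mem_iff.mp a.2]
  exact (map_ne_zero_iff f hf).mpr ha

lemma dvd_or_isNilpotent_of_fst_dvd [Ring.KrullDimLE 0 A] (hf : Function.Injective f)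
    (hker : RingHom.ker π = IsLocalRing.maximalIdeal A) {a b : milnorRing O K A f π}
    (h : (a : O × A).1 ∣ (b : O × A).1) : a ∣ b ∨ IsNilpotent a ∧ IsNilpotent b := by
  have hnil : RingHom.ker π ≤ nilradical A :=
    (hker.trans (Ring.KrullDimLE.nilradical_eq_maximalIdeal A).symm).le
  by_cases ha : (a : O × A).1 = 0
  · have hb : (b : O × A).1 = 0 := zero_dvd_iff.mp (ha ▸ h)
    exact Or.inr ⟨isNilpotent_of_fst_eq_zero hnil ha, isNilpotent_of_fst_eq_zero hnil hb⟩
  · exact Or.inl (dvd_of_isUnit_snd (isUnit_snd_of_fst_ne_zero hf hker ha) h)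

end Local

end milnorRing

theorem stmt_6_general (O K A : Type*) [CommRing O] [IsDomain O] [ValuationRing O]
    [Field K] [Algebra O K] [IsFractionRing O K]
    [CommRing A] [IsLocalRing A] (hA : ringKrullDim A = 0)
    (π : A →+* K)
    (hker : RingHom.ker π = IsLocalRing.maximalIdeal A) :
    ∀ a b : milnorRing O K A (algebraMap O K) π,
      a ∣ b ∨ b ∣ a ∨ (IsNilpotent a ∧ IsNilpotent b) := by
  have : Ring.KrullDimLE 0 A := Ring.krullDimLE_iff.mpr hA.le
  have hf := IsFractionRing.injective O K
  intro a b
  rcases ValuationRing.dvd_total (a : O × A).1 (b : O × A).1 with h | h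
  · exact (milnorRing.dvd_or_isNilpotent_of_fst_dvd hf hker h).imp_right Or.inr
  · rcases milnorRing.dvd_or_isNilpotent_of_fst_dvd hf hker h with hba | ⟨hb, ha⟩
    · exact Or.inr (Or.inl hba)
    · exact Or.inr (Or.inr ⟨ha, hb⟩)

/-- Let `𝒪` be a valuation ring with fraction field `K`, `A` a zero-dimensional local
ring with residue field `K`, and `R = 𝒪 ×_K A`.  Then in `R` the divisibility
trichotomy holds: for all `a b : R`, either `a ∣ b`, or `b ∣ a`, or `a` and `b` are
both nilpotent. -/
theorem stmt_6 (O K A : Type*) [CommRing O] [IsDomain O] [ValuationRing O]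
    [Field K] [Algebra O K] [IsFractionRing O K]
    [CommRing A] [IsLocalRing A] (hA : ringKrullDim A = 0)
    (π : A →+* K) (hπ : Function.Surjective π)
    (hker : RingHom.ker π = IsLocalRing.maximalIdeal A) :
    ∀ a b : milnorRing O K A (algebraMap O K) π,
      a ∣ b ∨ b ∣ a ∨ (IsNilpotent a ∧ IsNilpotent b) :=
  stmt_6_general O K A hA π hker
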